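/- arXiv:1510.03401 — 4 statements merged into one kernel-verified Lean document; each statement's English description precedes it below -/
import Mathlib

section
/- Let a ≥ 2, j ≠ 0, s be integers and d a squarefree positive integer. Suppose i ≥ 1 and d divides j·a^i + s. Then, with B = gcd(d, j·a), one has gcd(d, s) = gcd(d, j·a^i) = B, and a^{i-1} lies in a uniquely determined residue class coprime to d/B modulo d/B; in particular gcd(a, d/B) = 1. -/
/-!
Since `d` is squarefree, a divisor of `d` divides `x ^ i` (`i ≥ 1`) only if it divides `x`, so
`gcd(d, j a^i) = gcd(d, j a) = B`; and `d ∣ j a^i + s` gives `gcd(d, s) = gcd(d, j a^i)`.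
Squarefreeness also makes `B` and `d / B` coprime, so every common divisor of `a` and `d / B`,
dividing both `j a` and `d`, hence `B`, is `1`. Thus `a` is a unit mod `d / B`, and so is `a^(i-1)`.
-/

theorem existsUnique_units_eq_val {M : Type*} [Monoid M] {x : M} (hx : IsUnit x) :
    ∃! u : Mˣ, x = u :=
  ⟨hx.unit, hx.unit_spec.symm, fun _ hu => Units.ext (hu.symm.trans hx.unit_spec.symm)⟩

namespace Int

theorem gcd_eq_gcd_of_dvd_add {d s t : ℤ} (h : d ∣ t + s) : d.gcd s = d.gcd t := by
  obtain ⟨k, hk⟩ := h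
  rw [show s = k * d + -t by linarith, gcd_mul_right_add_right, gcd_neg]

theorem gcd_pow_of_squarefree {d : ℤ} (hd : Squarefree d) (x : ℤ) {i : ℕ} (hi : i ≠ 0) :
    d.gcd (x ^ i) = d.gcd x := by
  refine Nat.dvd_antisymm ?_ (gcd_dvd_gcd_of_dvd_right _ (dvd_pow_self x hi))
  have hg : (d.gcd (x ^ i) : ℤ) ∣ d := gcd_dvd_left _ _
  have hgx : (d.gcd (x ^ i) : ℤ) ∣ x :=
    ((hd.squarefree_of_dvd hg).dvd_pow_iff_dvd hi).mp (gcd_dvd_right _ _)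
  exact dvd_gcd hg hgx

theorem gcd_mul_pow_of_squarefree {d : ℤ} (hd : Squarefree d) (j a : ℤ) {i : ℕ} (hi : i ≠ 0) :
    d.gcd (j * a ^ i) = d.gcd (j * a) := by
  refine Nat.dvd_antisymm ?_ ?_
  · rw [← gcd_pow_of_squarefree hd (j * a) hi, mul_pow]
    exact gcd_dvd_gcd_of_dvd_right _ (mul_dvd_mul_right (dvd_pow_self j hi) _)
  · exact gcd_dvd_gcd_of_dvd_right _ (mul_dvd_mul_left j (dvd_pow_self a hi))

theorem gcd_div_gcd_eq_one_of_squarefree {d : ℕ} (hd : Squarefree d) (x : ℤ) :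
    x.gcd ((d / (d : ℤ).gcd x : ℕ) : ℤ) = 1 := by
  set B := (d : ℤ).gcd x
  have hBd : B ∣ d := natCast_dvd_natCast.mp (gcd_dvd_left _ _)
  have hcop : B.Coprime (d / B) :=
    Nat.coprime_of_squarefree_mul (by rwa [Nat.mul_div_cancel' hBd])
  set g := x.gcd ((d / B : ℕ) : ℤ)
  have hgq : g ∣ d / B := natCast_dvd_natCast.mp (gcd_dvd_right _ _)
  have hgd : (g : ℤ) ∣ d := natCast_dvd_natCast.mpr (hgq.trans (Nat.div_dvd_of_dvd hBd))
  have hgB : g ∣ B := dvd_gcd hgd (gcd_dvd_left _ _)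
  exact Nat.eq_one_of_dvd_coprimes hcop hgB hgq

end Int

theorem stmt_11_general (a : ℤ) (j : ℤ) (s : ℤ)
    (d : ℕ) (hsf : Squarefree d) (i : ℕ) (hi : 1 ≤ i)
    (hdvd : (d : ℤ) ∣ j * a ^ i + s) :
    Int.gcd (d : ℤ) s = Int.gcd (d : ℤ) (j * a) ∧
    Int.gcd (d : ℤ) (j * a ^ i) = Int.gcd (d : ℤ) (j * a) ∧
    (∃! c : (ZMod (d / Int.gcd (d : ℤ) (j * a)))ˣ,
      ((a : ZMod (d / Int.gcd (d : ℤ) (j * a))) ^ (i - 1) = (c : ZMod (d / Int.gcd (d : ℤ) (j * a))))) ∧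
    Int.gcd a ((d / Int.gcd (d : ℤ) (j * a) : ℕ) : ℤ) = 1 := by
  have hpow := Int.gcd_mul_pow_of_squarefree (Int.squarefree_natCast.mpr hsf) j a
    (Nat.one_le_iff_ne_zero.mp hi)
  have hcop : Int.gcd a ((d / Int.gcd (d : ℤ) (j * a) : ℕ) : ℤ) = 1 :=
    Nat.eq_one_of_dvd_one <| (Int.gcd_div_gcd_eq_one_of_squarefree hsf (j * a)).symm ▸
      Int.gcd_dvd_gcd_of_dvd_left _ (dvd_mul_left a j)
  have hunit : IsUnit (a : ZMod (d / Int.gcd (d : ℤ) (j * a))) :=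
    (ZMod.coe_int_isUnit_iff_isCoprime _ _).mpr
      (Int.isCoprime_iff_gcd_eq_one.mpr (by rwa [Int.gcd_comm]))
  exact ⟨(Int.gcd_eq_gcd_of_dvd_add hdvd).trans hpow, hpow,
    existsUnique_units_eq_val (hunit.pow _), hcop⟩

theorem stmt_11 (a : ℤ) (ha : 2 ≤ a) (j : ℤ) (hj : j ≠ 0) (s : ℤ)
    (d : ℕ) (hd : 0 < d) (hsf : Squarefree d) (i : ℕ) (hi : 1 ≤ i)
    (hdvd : (d : ℤ) ∣ j * a ^ i + s) :
    Int.gcd (d : ℤ) s = Int.gcd (d : ℤ) (j * a) ∧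
    Int.gcd (d : ℤ) (j * a ^ i) = Int.gcd (d : ℤ) (j * a) ∧
    (∃! c : (ZMod (d / Int.gcd (d : ℤ) (j * a)))ˣ,
      ((a : ZMod (d / Int.gcd (d : ℤ) (j * a))) ^ (i - 1) = (c : ZMod (d / Int.gcd (d : ℤ) (j * a))))) ∧
    Int.gcd a ((d / Int.gcd (d : ℤ) (j * a) : ℕ) : ℤ) = 1 :=
  stmt_11_general a j s d hsf i hi hdvd
end

section
/- (Erdős's strengthening of Romanoff's theorem) For any integer A ≥ 2 and any integer S ≥ 1, the series ∑_{n ≥ 1, gcd(n, A) = 1} S^{ω(n)} / (n · ℓ_A(n)) converges, where ℓ_A(n) is the multiplicative order of A modulo n and ω(n) is the number of distinct prime factors of n. -/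
/-!
Group the terms by `j = ⌊log₂ ℓ_A(n)⌋`. Every `n` of the `j`-th group divides
`M = ∏_{d ≤ 2^(j+1)} (A^d - 1) ≤ 2^2^(A+2j+2)` and contributes at most `2^(-j) S^ω(n) / n`.
Multiplicativity gives `∑_{n ∣ m} S^ω(n) / n ≤ exp (S ∑_{p ∣ m} 1/(p-1))`, and Chebyshev's bound
`primorial x ≤ 4^x`, applied on dyadic blocks, gives `∑_{p ∣ m} 1/(p-1) ≤ 6 + 4 log K` whenever
`m ≤ 2^2^(K+1)`. Hence the `j`-th group is `O(j^(4S) / 2^j)`, a summable majorant.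
-/

open Finset Real Asymptotics Filter

theorem summable_of_sum_fiber_le {ι κ : Type*} {f : ι → ℝ} {g : κ → ℝ} (φ : ι → κ)
    (hf : 0 ≤ f) (hg : Summable g)
    (hfg : ∀ k (s : Finset ι), (∀ i ∈ s, φ i = k) → ∑ i ∈ s, f i ≤ g k) : Summable f := by
  classical
  have hg₀ : ∀ k, 0 ≤ g k := fun k => by simpa using hfg k ∅ (by simp)
  refine summable_of_sum_le (c := ∑' k, g k) hf fun s => ?_
  rw [← sum_fiberwise_of_maps_to fun i hi => mem_image_of_mem φ hi]
  calc _ ≤ ∑ k ∈ s.image φ, g k :=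
        sum_le_sum fun k _ => hfg k _ fun i hi => (mem_filter.1 hi).2
    _ ≤ ∑' k, g k := hg.sum_le_tsum _ fun k _ => hg₀ k

theorem orderOf_natCast_pos {A n : ℕ} (hn : n ≠ 0) (h : n.Coprime A) :
    0 < orderOf (A : ZMod n) := by
  have : NeZero n := ⟨hn⟩
  rw [← ZMod.coe_unitOfCoprime A h.symm, orderOf_units]
  exact orderOf_pos _

theorem dvd_pow_orderOf_natCast_sub_one (A n : ℕ) : n ∣ A ^ orderOf (A : ZMod n) - 1 := by
  rw [← ZMod.natCast_eq_zero_iff]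
  rcases Nat.eq_zero_or_pos (A ^ orderOf (A : ZMod n)) with h | h
  · simp [h]
  · rw [Nat.cast_sub h, Nat.cast_pow, pow_orderOf_eq_one, Nat.cast_one, sub_self]

theorem dvd_prod_pow_sub_one {A n N : ℕ} (hn : n ≠ 0) (h : n.Coprime A)
    (hN : orderOf (A : ZMod n) ≤ N) : n ∣ ∏ d ∈ Icc 1 N, (A ^ d - 1) :=
  (dvd_pow_orderOf_natCast_sub_one A n).trans <|
    dvd_prod_of_mem _ (mem_Icc.2 ⟨orderOf_natCast_pos hn h, hN⟩)

theorem prod_pow_sub_one_ne_zero {A : ℕ} (hA : 2 ≤ A) (N : ℕ) :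
    ∏ d ∈ Icc 1 N, (A ^ d - 1) ≠ 0 :=
  prod_ne_zero_iff.2 fun _ hd =>
    (Nat.sub_pos_of_lt (Nat.one_lt_pow (Nat.one_le_iff_ne_zero.1 (mem_Icc.1 hd).1) hA)).ne'

theorem prod_pow_sub_one_le {A : ℕ} (hA : 0 < A) (N : ℕ) :
    ∏ d ∈ Icc 1 N, (A ^ d - 1) ≤ A ^ (N * N) :=
  calc ∏ d ∈ Icc 1 N, (A ^ d - 1) ≤ ∏ d ∈ Icc 1 N, A ^ d :=
        prod_le_prod' fun d _ => Nat.sub_le _ _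
    _ = A ^ ∑ d ∈ Icc 1 N, d := prod_pow_eq_pow_sum _ _ _
    _ ≤ A ^ (N * N) := by
      refine Nat.pow_le_pow_right hA ?_
      simpa using sum_le_card_nsmul (Icc 1 N) id N fun d hd => (mem_Icc.1 hd).2

theorem pow_mul_self_two_pow_le (A i : ℕ) : A ^ (2 ^ i * 2 ^ i) ≤ 2 ^ 2 ^ (A + 2 * i) :=
  calc A ^ (2 ^ i * 2 ^ i) ≤ (2 ^ A) ^ (2 ^ i * 2 ^ i) :=
        Nat.pow_le_pow_left Nat.lt_two_pow_self.le _
    _ = 2 ^ (A * (2 ^ i * 2 ^ i)) := (pow_mul _ _ _).symm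
    _ ≤ 2 ^ (2 ^ A * (2 ^ i * 2 ^ i)) :=
        Nat.pow_le_pow_right two_pos (Nat.mul_le_mul_right _ Nat.lt_two_pow_self.le)
    _ = 2 ^ 2 ^ (A + 2 * i) := by rw [← pow_add, ← pow_add, two_mul]

namespace ArithmeticFunction

noncomputable def primeFactorsWeight (c : ℝ) : ArithmeticFunction ℝ :=
  ⟨fun n => c ^ #n.primeFactors / n, by simp⟩

theorem primeFactorsWeight_apply (c : ℝ) (n : ℕ) :
    primeFactorsWeight c n = c ^ #n.primeFactors / n := rfl

theorem isMultiplicative_primeFactorsWeight (c : ℝ) :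
    (primeFactorsWeight c).IsMultiplicative := by
  refine ⟨by simp [primeFactorsWeight_apply], fun {m n} hmn => ?_⟩
  rcases eq_or_ne m 0 with rfl | hm
  · simp [(Nat.coprime_zero_left _).1 hmn]
  rcases eq_or_ne n 0 with rfl | hn
  · simp [(Nat.coprime_zero_right _).1 hmn]
  simp only [primeFactorsWeight_apply, hmn.primeFactors_mul,
    card_union_of_disjoint hmn.disjoint_primeFactors, pow_add, Nat.cast_mul, div_mul_div_comm]

theorem sum_primeFactorsWeight_prime_pow_le {c : ℝ} (hc : 0 ≤ c) {p : ℕ} (hp : p.Prime)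
    (k : ℕ) : ∑ i ∈ range (k + 1), primeFactorsWeight c (p ^ i) ≤ 1 + c / (p - 1) := by
  have hp₁ : (1 : ℝ) < p := by exact_mod_cast hp.one_lt
  have hpow (i) (hi : i ∈ Ico 1 (k + 1)) : primeFactorsWeight c (p ^ i) = c * (1 / p) ^ i := by
    rw [primeFactorsWeight_apply, Nat.primeFactors_prime_pow (by grind) hp]
    simp [div_eq_mul_inv]
  have hgeom : ∑ i ∈ Ico 1 (k + 1), (1 / (p : ℝ)) ^ i ≤ 1 / (p - 1) := by
    have hr : 1 / (p : ℝ) < 1 := (div_lt_one (by linarith)).2 hp₁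
    exact (geom_sum_Ico_le_of_lt_one (by positivity) hr).trans_eq (by field_simp)
  rw [range_eq_Ico, sum_eq_sum_Ico_succ_bot (Nat.succ_pos k), sum_congr rfl hpow, ← mul_sum]
  have := mul_le_mul_of_nonneg_left hgeom hc
  rw [mul_one_div] at this
  simp only [pow_zero, primeFactorsWeight_apply, Nat.primeFactors_one, card_empty, Nat.cast_one,
    div_one]
  linarith

end ArithmeticFunction

open ArithmeticFunction in
open scoped ArithmeticFunction.zeta in
theorem sum_divisors_pow_card_primeFactors_div_le {c : ℝ} (hc : 0 ≤ c) {m : ℕ} (hm : m ≠ 0) :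
    ∑ n ∈ m.divisors, c ^ #n.primeFactors / n ≤
      exp (c * ∑ p ∈ m.primeFactors, 1 / ((p : ℝ) - 1)) := by
  have hmul : ((ζ : ArithmeticFunction ℝ) * primeFactorsWeight c).IsMultiplicative :=
    isMultiplicative_zeta.natCast.mul (isMultiplicative_primeFactorsWeight c)
  have hprime (p) (hp : p.Prime) (k : ℕ) :
      ((ζ : ArithmeticFunction ℝ) * primeFactorsWeight c) (p ^ k) ≤ exp (c * (1 / (p - 1))) := by
    rw [coe_zeta_mul_apply, Nat.sum_divisors_prime_pow hp]
    refine (sum_primeFactorsWeight_prime_pow_le hc hp k).trans ?_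
    linarith [add_one_le_exp (c * (1 / (p - 1))), mul_one_div c ((p : ℝ) - 1)]
  calc ∑ n ∈ m.divisors, c ^ #n.primeFactors / n
      = ((ζ : ArithmeticFunction ℝ) * primeFactorsWeight c) m := by
        rw [coe_zeta_mul_apply]; rfl
    _ = ∏ p ∈ m.primeFactors, ((ζ : ArithmeticFunction ℝ) * primeFactorsWeight c)
          (p ^ m.factorization p) := by
      rw [hmul.multiplicative_factorization _ hm, Finsupp.prod, Nat.support_factorization]
    _ ≤ ∏ p ∈ m.primeFactors, exp (c * (1 / ((p : ℝ) - 1))) := by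
      refine prod_le_prod (fun p _ => ?_) fun p hp => hprime p (Nat.prime_of_mem_primeFactors hp) _
      rw [coe_zeta_mul_apply]
      exact sum_nonneg fun n _ => by rw [primeFactorsWeight_apply]; positivity
    _ = exp (c * ∑ p ∈ m.primeFactors, 1 / ((p : ℝ) - 1)) := by rw [← exp_sum, mul_sum]

theorem mul_sum_one_div_sub_one_le_of_prod_le {P : Finset ℕ} {i N : ℕ}
    (hP : ∀ p ∈ P, 2 ^ i < p) (hprod : ∏ p ∈ P, p ≤ 2 ^ N) :
    (i : ℝ) * ∑ p ∈ P, 1 / ((p : ℝ) - 1) ≤ N / 2 ^ i := by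
  have hcard : i * #P ≤ N := by
    refine (Nat.pow_le_pow_iff_right one_lt_two).1 ?_
    rw [pow_mul]
    exact (pow_card_le_prod _ _ _ fun p hp => (hP p hp).le).trans hprod
  have hterm : ∀ p ∈ P, 1 / ((p : ℝ) - 1) ≤ 1 / 2 ^ i := fun p hp => by
    have : (2 : ℝ) ^ i + 1 ≤ p := by exact_mod_cast hP p hp
    exact one_div_le_one_div_of_le (by positivity) (by linarith)
  calc (i : ℝ) * ∑ p ∈ P, 1 / ((p : ℝ) - 1) ≤ i * (#P • (1 / 2 ^ i)) := by
        gcongr; exact sum_le_card_nsmul _ _ _ hterm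
    _ = ((i * #P : ℕ) : ℝ) / 2 ^ i := by push_cast; ring
    _ ≤ N / 2 ^ i := by gcongr

theorem sum_prime_Ioc_one_div_sub_one_le (K : ℕ) :
    ∑ p ∈ Ioc (0 : ℕ) (2 ^ (K + 1)) with p.Prime, 1 / ((p : ℝ) - 1) ≤ 1 + 4 * harmonic K := by
  induction K with
  | zero =>
    have : {p ∈ Ioc (0 : ℕ) 2 | p.Prime} = {2} := by decide
    norm_num [this]
  | succ K ih =>
    have hblock : ((K + 1 : ℕ) : ℝ) * ∑ p ∈ Ioc (2 ^ (K + 1) : ℕ) (2 ^ (K + 2)) with p.Prime,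
        1 / ((p : ℝ) - 1) ≤ 4 := by
      refine (mul_sum_one_div_sub_one_le_of_prod_le (N := 2 ^ (K + 3))
        (fun p hp => (mem_Ioc.1 (mem_filter.1 hp).1).1) ?_).trans_eq
        (by push_cast; field_simp; ring)
      calc ∏ p ∈ Ioc (2 ^ (K + 1) : ℕ) (2 ^ (K + 2)) with p.Prime, p
          ≤ primorial (2 ^ (K + 2)) := by
            refine prod_le_prod_of_subset_of_one_le' (fun p hp => ?_)
              fun p hp _ => (mem_filter.1 hp).2.one_lt.le
            simp only [mem_filter, mem_Ioc, mem_range] at hp ⊢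
            exact ⟨Nat.lt_succ_of_le hp.1.2, hp.2⟩
        _ ≤ 4 ^ 2 ^ (K + 2) := primorial_le_four_pow _
        _ = 2 ^ 2 ^ (K + 3) := by rw [show (4 : ℕ) = 2 ^ 2 from rfl, ← pow_mul]; ring
    rw [sum_filter, ← sum_Ioc_consecutive _ (Nat.zero_le _)
      (Nat.pow_le_pow_right two_pos (K + 1).le_succ), ← sum_filter, ← sum_filter, harmonic_succ]
    rw [← le_div_iff₀' (by positivity)] at hblock
    push_cast at ih hblock ⊢
    linarith [div_eq_mul_inv (4 : ℝ) (K + 1)]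

theorem sum_primeFactors_one_div_sub_one_le {m : ℕ} (hm : m ≠ 0) {K : ℕ}
    (hmK : m ≤ 2 ^ 2 ^ (K + 1)) :
    ∑ p ∈ m.primeFactors, 1 / ((p : ℝ) - 1) ≤ 6 + 4 * log K := by
  rw [← sum_filter_add_sum_filter_not _ fun p : ℕ => p ≤ 2 ^ (K + 1)]
  have hsmall :
      ∑ p ∈ m.primeFactors with p ≤ 2 ^ (K + 1), 1 / ((p : ℝ) - 1) ≤ 5 + 4 * log K := by
    calc _ ≤ ∑ p ∈ Ioc (0 : ℕ) (2 ^ (K + 1)) with p.Prime, 1 / ((p : ℝ) - 1) := by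
          refine sum_le_sum_of_subset_of_nonneg (fun p hp => ?_) fun p hp _ => ?_
          · simp only [mem_filter, Nat.mem_primeFactors, mem_Ioc] at hp ⊢
            exact ⟨⟨hp.1.1.pos, hp.2⟩, hp.1.1⟩
          · exact one_div_nonneg.2 (sub_nonneg.2 (by exact_mod_cast (mem_filter.1 hp).2.one_le))
      _ ≤ 1 + 4 * harmonic K := sum_prime_Ioc_one_div_sub_one_le K
      _ ≤ 5 + 4 * log K := by linarith [harmonic_le_one_add_log K]
  have hlarge : ((K + 1 : ℕ) : ℝ) *
      ∑ p ∈ m.primeFactors with ¬p ≤ 2 ^ (K + 1), 1 / ((p : ℝ) - 1) ≤ 1 := by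
    refine (mul_sum_one_div_sub_one_le_of_prod_le (N := 2 ^ (K + 1))
      (fun p hp => not_le.1 (mem_filter.1 hp).2) ?_).trans_eq (by push_cast; field_simp)
    refine (Nat.le_of_dvd (Nat.pos_of_ne_zero hm) ?_).trans hmK
    exact (prod_dvd_prod_of_subset _ _ _ (filter_subset _ _)).trans (Nat.prod_primeFactors_dvd m)
  rw [← le_div_iff₀' (by positivity)] at hlarge
  have : 1 / ((K + 1 : ℕ) : ℝ) ≤ 1 := div_le_one_of_le₀ (by simp) (by positivity)
  linarith

theorem summable_geometric_mul_exp_log (A S : ℕ) :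
    Summable fun j : ℕ => (1 / 2 : ℝ) ^ j * exp (S * (6 + 4 * log (A + 2 * j + 1))) := by
  refine summable_of_isBigO_nat
    (summable_pow_mul_geometric_of_norm_lt_one (4 * S) (r := (1 / 2 : ℝ)) (by norm_num)) ?_
  refine IsBigO.of_bound (exp (6 * S) * (A + 3) ^ (4 * S))
    (eventually_atTop.2 ⟨1, fun j hj => ?_⟩)
  have hj : (1 : ℝ) ≤ j := by exact_mod_cast hj
  have hK : (A : ℝ) + 2 * j + 1 ≤ (A + 3) * j := by nlinarith [Nat.cast_nonneg (α := ℝ) A]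
  have hexp : exp (S * (6 + 4 * log (A + 2 * j + 1))) =
      exp (6 * S) * (A + 2 * j + 1) ^ (4 * S) := by
    rw [show (S : ℝ) * (6 + 4 * log (A + 2 * j + 1)) =
        6 * S + ((4 * S : ℕ) : ℝ) * log (A + 2 * j + 1) by push_cast; ring,
      exp_add, exp_nat_mul, exp_log (by positivity)]
  rw [hexp, norm_of_nonneg (by positivity), norm_of_nonneg (by positivity)]
  calc (1 / 2 : ℝ) ^ j * (exp (6 * S) * (A + 2 * j + 1) ^ (4 * S))
      ≤ (1 / 2) ^ j * (exp (6 * S) * ((A + 3) * j) ^ (4 * S)) := by gcongr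
    _ = exp (6 * S) * (A + 3) ^ (4 * S) * ((j : ℝ) ^ (4 * S) * (1 / 2) ^ j) := by
      rw [mul_pow]; ring

theorem sum_div_mul_orderOf_le_of_log_orderOf_eq {A : ℕ} (hA : 2 ≤ A) {c : ℝ} (hc : 0 ≤ c)
    {j : ℕ} {s : Finset ℕ} (hs : ∀ n ∈ s, Nat.log 2 (orderOf (A : ZMod n)) = j) :
    ∑ n ∈ s, (if 0 < n ∧ n.Coprime A then c ^ #n.primeFactors / (n * orderOf (A : ZMod n))
      else 0) ≤ (1 / 2) ^ j * exp (c * (6 + 4 * log (A + 2 * j + 1))) := by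
  set M := ∏ d ∈ Icc 1 (2 ^ (j + 1)), (A ^ d - 1)
  have hM : M ≠ 0 := prod_pow_sub_one_ne_zero hA _
  have hMK : M ≤ 2 ^ 2 ^ ((A + 2 * j + 1) + 1) :=
    (prod_pow_sub_one_le (by omega) _).trans (pow_mul_self_two_pow_le A (j + 1))
  have hterm : ∀ n ∈ s,
      (if 0 < n ∧ n.Coprime A then c ^ #n.primeFactors / (n * orderOf (A : ZMod n)) else 0)
        ≤ (1 / 2) ^ j * (if n ∈ M.divisors then c ^ #n.primeFactors / n else 0) := by
    intro n hn
    split_ifs with hcop hdiv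
    · have hℓ := orderOf_natCast_pos hcop.1.ne' hcop.2
      have hlow : (2 : ℝ) ^ j ≤ orderOf (A : ZMod n) := by
        exact_mod_cast (hs n hn) ▸ Nat.pow_log_le_self 2 hℓ.ne'
      have hn₀ : (0 : ℝ) < n := by exact_mod_cast hcop.1
      rw [one_div_pow, one_div_mul_eq_div, div_div]
      gcongr
    · refine absurd (Nat.mem_divisors.2 ⟨dvd_prod_pow_sub_one hcop.1.ne' hcop.2 ?_, hM⟩) hdiv
      exact ((hs n hn) ▸ Nat.lt_pow_succ_log_self one_lt_two _).le
    · positivity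
    · simp
  calc _ ≤ ∑ n ∈ s, (1 / 2) ^ j * (if n ∈ M.divisors then c ^ #n.primeFactors / n else 0) :=
        sum_le_sum hterm
    _ ≤ (1 / 2) ^ j * ∑ n ∈ M.divisors, c ^ #n.primeFactors / n := by
      rw [← mul_sum, sum_ite_mem]
      gcongr
      exact inter_subset_right
    _ ≤ (1 / 2) ^ j * exp (c * ∑ p ∈ M.primeFactors, 1 / ((p : ℝ) - 1)) := by
      gcongr; exact sum_divisors_pow_card_primeFactors_div_le hc hM
    _ ≤ (1 / 2) ^ j * exp (c * (6 + 4 * log (A + 2 * j + 1))) := by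
      gcongr
      exact_mod_cast sum_primeFactors_one_div_sub_one_le hM hMK

theorem stmt_13_general (A S : ℕ) (hA : 2 ≤ A) :
    Summable (fun n : ℕ =>
      if 0 < n ∧ Nat.Coprime n A then
        (S : ℝ) ^ n.primeFactors.card / ((n : ℝ) * orderOf (A : ZMod n))
      else 0) :=
  summable_of_sum_fiber_le (fun n => Nat.log 2 (orderOf (A : ZMod n)))
    (fun n => by dsimp only; split_ifs <;> positivity) (summable_geometric_mul_exp_log A S)
    fun _ _ hs => sum_div_mul_orderOf_le_of_log_orderOf_eq hA S.cast_nonneg hs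

theorem stmt_13 (A S : ℕ) (hA : 2 ≤ A) (hS : 1 ≤ S) :
    Summable (fun n : ℕ =>
      if 0 < n ∧ Nat.Coprime n A then
        (S : ℝ) ^ n.primeFactors.card / ((n : ℝ) * orderOf (A : ZMod n))
      else 0) :=
  stmt_13_general A S hA
end

section
/- Let j and a be fixed nonzero integers and suppose the series ∑_{d' ≥ 1, gcd(a,d')=1} 2^{ω(d')}/(d'·ℓ_a(d')) converges. Then ∑_{d ≥ 1, gcd(a, d/gcd(d,ja))=1} 2^{ω(d)}/(d · ℓ_a(d/gcd(d,ja))) ≤ (∑_{B | ja} 2^{ω(B)}/B) · (∑_{d', gcd(a,d')=1} 2^{ω(d')}/(d'·ℓ_a(d'))), and in particular this sum is finite. -/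
/-!
Write `N = |ja|`. Each `d ≥ 1` factors uniquely as `d = B * d'` with `B = gcd(d, N)`, a divisor
of `N`, and `d' = d / B`. Since `ω(B d') ≤ ω(B) + ω(d')`, the `d`-th term is at most
`2^ω(B)/B · 2^ω(d')/(d' ℓ_a(d'))`, and `d ↦ (B, d')` is injective, so the left-hand series is
dominated by the product of the finite sum over `B ∣ N` with the series over `d'`.
-/

open Function

lemma tsum_le_tsum_mul_tsum_of_le_mul {α β γ : Type*} {g : α → ℝ} {u : β → ℝ} {v : γ → ℝ}
    (hg : 0 ≤ g) (hu : 0 ≤ u) (hv : 0 ≤ v) (hus : Summable u) (hvs : Summable v)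
    {φ : α → β × γ} (hφ : Injective φ) (hle : ∀ x, g x ≤ u (φ x).1 * v (φ x).2) :
    ∑' x, g x ≤ (∑' b, u b) * ∑' c, v c := by
  have huv : Summable fun p : β × γ => u p.1 * v p.2 := hus.mul_of_nonneg hvs hu hv
  have huvφ : Summable fun x => u (φ x).1 * v (φ x).2 := huv.comp_injective hφ
  calc ∑' x, g x ≤ ∑' x, u (φ x).1 * v (φ x).2 :=
        (huvφ.of_nonneg_of_le hg hle).tsum_le_tsum hle huvφ
    _ ≤ ∑' p : β × γ, u p.1 * v p.2 :=
        tsum_comp_le_tsum_of_inj huv (fun p => mul_nonneg (hu _) (hv _)) hφ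
    _ = (∑' b, u b) * ∑' c, v c := (hus.tsum_mul_tsum hvs huv).symm

lemma Nat.card_primeFactors_mul_le (m n : ℕ) :
    (m * n).primeFactors.card ≤ m.primeFactors.card + n.primeFactors.card := by
  rcases eq_or_ne m 0 with rfl | hm
  · simp
  rcases eq_or_ne n 0 with rfl | hn
  · simp
  rw [Nat.primeFactors_mul hm hn]
  exact Finset.card_union_le _ _

lemma two_pow_card_primeFactors_div_le_of_dvd {B d : ℕ} (hB : B ∣ d) {c : ℝ} (hc : 0 ≤ c) :
    (2 : ℝ) ^ d.primeFactors.card / (d * c) ≤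
      2 ^ B.primeFactors.card / B * (2 ^ (d / B).primeFactors.card / ((d / B : ℕ) * c)) := by
  obtain ⟨m, rfl⟩ := hB
  rcases B.eq_zero_or_pos with rfl | hB
  · simp
  rw [Nat.mul_div_cancel_left m hB, div_mul_div_comm, ← pow_add, Nat.cast_mul, mul_assoc]
  gcongr
  · norm_num
  · exact Nat.card_primeFactors_mul_le B m

theorem stmt_16 (a : ℕ) (ha : 2 ≤ a) (j : ℤ) (hj : j ≠ 0)
    (hconv : Summable (fun d' : ℕ =>
      if 0 < d' ∧ Nat.Coprime a d' then
        (2 : ℝ) ^ d'.primeFactors.card / ((d' : ℝ) * orderOf ((a : ℕ) : ZMod d'))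
      else 0)) :
    (∑' d : ℕ,
      if 0 < d ∧ Nat.Coprime a (d / Nat.gcd d (j * (a : ℤ)).natAbs) then
        (2 : ℝ) ^ d.primeFactors.card /
          ((d : ℝ) * orderOf ((a : ℕ) : ZMod (d / Nat.gcd d (j * (a : ℤ)).natAbs)))
      else 0) ≤
    (∑ B ∈ (j * (a : ℤ)).natAbs.divisors, (2 : ℝ) ^ B.primeFactors.card / B) *
      (∑' d' : ℕ,
        if 0 < d' ∧ Nat.Coprime a d' then
          (2 : ℝ) ^ d'.primeFactors.card / ((d' : ℝ) * orderOf ((a : ℕ) : ZMod d'))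
        else 0) := by
  set N := (j * (a : ℤ)).natAbs
  have hN : N ≠ 0 := Int.natAbs_ne_zero.mpr (mul_ne_zero hj (by omega))
  let φ : ℕ → N.divisors × ℕ := fun d =>
    (⟨d.gcd N, Nat.mem_divisors.mpr ⟨Nat.gcd_dvd_right d N, hN⟩⟩, d / d.gcd N)
  have hφ : Injective φ := fun d e hde => by
    simp only [φ, Prod.mk.injEq, Subtype.mk.injEq] at hde
    rw [← Nat.mul_div_cancel' (Nat.gcd_dvd_left d N), ← Nat.mul_div_cancel' (Nat.gcd_dvd_left e N),
      hde.2, hde.1]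
  rw [← Finset.tsum_subtype]
  refine tsum_le_tsum_mul_tsum_of_le_mul (fun d => ?_) (fun B => by positivity)
    (fun d => ?_) (.of_finite) hconv hφ (fun d => ?_)
  · dsimp only; split <;> positivity
  · dsimp only; split <;> positivity
  · dsimp only [φ]
    split_ifs with hd hd'
    · exact two_pow_card_primeFactors_div_le_of_dvd (Nat.gcd_dvd_left d N) (by positivity)
    · exact absurd ⟨Nat.div_pos (Nat.gcd_le_left N hd.1) (Nat.gcd_pos_of_pos_left N hd.1), hd.2⟩ hd'
    all_goals positivity
end

section
/- Fix an integer K ≥ 2. For every real M there exist, for each integer 2 ≤ a ≤ K, a finite set P_a of primes such that: (i) for every p ∈ P_a, the largest prime factor q_p of a^p − 1 exceeds K; (ii) the primes q_p are pairwise distinct as p ranges over the disjoint union of the P_a; (iii) ∑_{p ∈ P_a} 1/p ≥ M for each a. -/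
/-!
If a prime `Q > a` divides `a ^ p - 1` with `p` prime, then `a` has order exactly `p` modulo `Q`;
so once `q_p > K`, the prime `q_p` determines `p` for each fixed base `a`. Stewart's bound makes
`q_p` exceed any prescribed threshold for all large `p`, and the primes beyond any point still have
divergent reciprocal sum. Choosing the blocks `P_a` one base at a time, each above the largest
`q_p` used so far, makes the `q_p` distinct across different bases as well.
-/

open Finset

theorem Nat.sup_primeFactors_mem {n : ℕ} (h : n.primeFactors.sup id ≠ 0) :
    n.primeFactors.sup id ∈ n.primeFactors := by
  have hne : n.primeFactors.Nonempty := by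
    rw [Finset.nonempty_iff_ne_empty]
    rintro hempty
    simp [hempty] at h
  obtain ⟨q, hq, hsup⟩ := Finset.exists_mem_eq_sup _ hne id
  rw [hsup]
  exact hq

theorem orderOf_natCast_eq_of_dvd_pow_sub_one {a p Q : ℕ} (hp : p.Prime) (hQ : Q.Prime)
    (ha : 2 ≤ a) (haQ : a < Q) (h : Q ∣ a ^ p - 1) : orderOf (a : ZMod Q) = p := by
  have := Fact.mk hp
  have hpow : (a : ZMod Q) ^ p = 1 := by
    rw [← ZMod.natCast_eq_zero_iff, Nat.cast_sub (Nat.one_le_pow _ _ (by omega))] at h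
    push_cast at h
    exact sub_eq_zero.mp h
  have hne : (a : ZMod Q) ≠ 1 := by
    rw [← Nat.cast_one, Ne, ZMod.natCast_eq_natCast_iff', Nat.mod_eq_of_lt haQ,
      Nat.mod_eq_of_lt hQ.one_lt]
    omega
  exact orderOf_eq_prime hpow hne

theorem injOn_sup_primeFactors_pow_sub_one {a : ℕ} (ha : 2 ≤ a) :
    Set.InjOn (fun p => (a ^ p - 1).primeFactors.sup id)
      {p | p.Prime ∧ a < (a ^ p - 1).primeFactors.sup id} := by
  rintro p ⟨hp, hap⟩ p' ⟨hp', hap'⟩ heq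
  have hQ := Nat.sup_primeFactors_mem (n := a ^ p - 1) (by omega)
  have hQ' := Nat.sup_primeFactors_mem (n := a ^ p' - 1) (by omega)
  simp only at heq
  rw [← heq] at hQ' hap'
  rw [← orderOf_natCast_eq_of_dvd_pow_sub_one hp (Nat.prime_of_mem_primeFactors hQ) ha hap
      (Nat.dvd_of_mem_primeFactors hQ),
    ← orderOf_natCast_eq_of_dvd_pow_sub_one hp' (Nat.prime_of_mem_primeFactors hQ) ha hap
      (Nat.dvd_of_mem_primeFactors hQ')]

theorem exists_finset_primes_gt_le_sum_one_div (T : ℕ) (M : ℝ) :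
    ∃ S : Finset ℕ, (∀ p ∈ S, p.Prime ∧ T < p) ∧ M ≤ ∑ p ∈ S, (1 : ℝ) / p := by
  set f := Set.indicator {p : ℕ | p.Prime} (fun n : ℕ => (1 : ℝ) / n)
  have hf : ∀ n, 0 ≤ f (n + (T + 1)) := fun n => Set.indicator_nonneg (fun _ _ => by positivity) _
  have htend := (not_summable_iff_tendsto_nat_atTop_of_nonneg hf).mp
    ((summable_nat_add_iff (T + 1)).not.mpr not_summable_one_div_on_primes)
  obtain ⟨n, hn⟩ := (htend.eventually_ge_atTop M).exists
  refine ⟨((range n).map (addRightEmbedding (T + 1))).filter Nat.Prime, ?_, ?_⟩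
  · intro p hp
    simp only [mem_filter, mem_map, mem_range, addRightEmbedding_apply] at hp
    obtain ⟨⟨i, -, rfl⟩, hp⟩ := hp
    exact ⟨hp, by omega⟩
  · simpa [sum_filter, f, Set.indicator_apply] using hn

theorem exists_injOn_prod_of_forall_exists_gt {ι α : Type*} [DecidableEq ι] (A : Finset ι)
    (f : ι → α → ℕ) (good : ι → Finset α → Prop)
    (h : ∀ a ∈ A, ∀ B : ℕ, ∃ S, good a S ∧ Set.InjOn (f a) S ∧ ∀ p ∈ S, B < f a p) :
    ∃ P : ι → Finset α, (∀ a ∈ A, good a (P a)) ∧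
      Set.InjOn (fun x : ι × α => f x.1 x.2) {x | x.1 ∈ A ∧ x.2 ∈ P x.1} := by
  induction A using Finset.induction_on with
  | empty => exact ⟨fun _ => ∅, by simp, by simp⟩
  | @insert a₀ A ha₀ ih =>
    obtain ⟨P, hgood, hinj⟩ := ih fun a ha => h a (mem_insert_of_mem ha)
    obtain ⟨S, hSgood, hSinj, hSgt⟩ :=
      h a₀ (mem_insert_self a₀ A) (A.sup fun a => (P a).sup (f a))
    refine ⟨Function.update P a₀ S, ?_, ?_⟩
    · intro a ha
      rcases mem_insert.mp ha with rfl | ha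
      · rwa [Function.update_self]
      · rw [Function.update_of_ne (ne_of_mem_of_not_mem ha ha₀)]
        exact hgood a ha
    · have hset : {x : ι × α | x.1 ∈ insert a₀ A ∧ x.2 ∈ Function.update P a₀ S x.1} =
          ({a₀} : Set ι) ×ˢ (S : Set α) ∪ {x | x.1 ∈ A ∧ x.2 ∈ P x.1} := by
        ext ⟨a, p⟩
        by_cases ha : a = a₀
        · subst ha; simp [ha₀]
        · simp [ha]
      rw [hset, Set.injOn_union]
      · refine ⟨?_, hinj, ?_⟩
        · rw [Set.singleton_prod]
          exact Set.InjOn.image_of_comp hSinj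
        · rintro ⟨_, p⟩ ⟨rfl, hp⟩ ⟨a, p'⟩ ⟨ha, hp'⟩
          have hle : f a p' ≤ A.sup fun a => (P a).sup (f a) :=
            (le_sup (f := f a) hp').trans (le_sup (f := fun a => (P a).sup (f a)) ha)
          exact (hle.trans_lt (hSgt p hp)).ne'
      · rw [Set.disjoint_left]
        rintro ⟨_, p⟩ ⟨rfl, -⟩ ⟨ha, -⟩
        exact ha₀ ha

theorem exists_primes_sup_primeFactors_pow_sub_one_gt {a : ℕ} {c : ℝ} (hc : 0 < c)
    (hst : ∀ p : ℕ, p.Prime → c * p * Real.log p ≤ (((a ^ p - 1).primeFactors.sup id : ℕ) : ℝ))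
    (B : ℕ) (M : ℝ) :
    ∃ S : Finset ℕ, (∀ p ∈ S, p.Prime ∧ B < (a ^ p - 1).primeFactors.sup id) ∧
      M ≤ ∑ p ∈ S, (1 : ℝ) / p := by
  have htend : Filter.Tendsto (fun p : ℕ => c * p * Real.log p) Filter.atTop Filter.atTop :=
    ((tendsto_natCast_atTop_atTop.const_mul_atTop hc).atTop_mul_atTop₀
      (Real.tendsto_log_atTop.comp tendsto_natCast_atTop_atTop))
  obtain ⟨T, hT⟩ := Filter.eventually_atTop.mp (htend.eventually_gt_atTop (B : ℝ))
  obtain ⟨S, hS, hsum⟩ := exists_finset_primes_gt_le_sum_one_div T M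
  refine ⟨S, fun p hp => ⟨(hS p hp).1, ?_⟩, hsum⟩
  exact_mod_cast (hT p (hS p hp).2.le).trans_le (hst p (hS p hp).1)

theorem stmt_18_general (K : ℕ)
    (stewart : ∃ c : ℝ, 0 < c ∧ ∀ p : ℕ, p.Prime → ∀ a : ℕ, 2 ≤ a → a ≤ K →
      c * p * Real.log p ≤ (((a ^ p - 1).primeFactors.sup id : ℕ) : ℝ))
    (M : ℝ) :
    ∃ P : ℕ → Finset ℕ,
      (∀ a ∈ Finset.Icc 2 K, ∀ p ∈ P a,
        p.Prime ∧ K < (a ^ p - 1).primeFactors.sup id) ∧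
      (∀ a ∈ Finset.Icc 2 K, ∀ a' ∈ Finset.Icc 2 K, ∀ p ∈ P a, ∀ p' ∈ P a',
        (a, p) ≠ (a', p') →
          (a ^ p - 1).primeFactors.sup id ≠ (a' ^ p' - 1).primeFactors.sup id) ∧
      (∀ a ∈ Finset.Icc 2 K, M ≤ ∑ p ∈ P a, (1 : ℝ) / p) := by
  obtain ⟨c, hc, hst⟩ := stewart
  obtain ⟨P, hgood, hinj⟩ := exists_injOn_prod_of_forall_exists_gt (Icc 2 K)
    (fun a (p : ℕ) => (a ^ p - 1).primeFactors.sup id)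
    (fun a (S : Finset ℕ) => (∀ p ∈ S, p.Prime ∧ K < (a ^ p - 1).primeFactors.sup id) ∧
      M ≤ ∑ p ∈ S, (1 : ℝ) / p) (by
    intro a ha B
    obtain ⟨ha2, haK⟩ := mem_Icc.mp ha
    obtain ⟨S, hS, hsum⟩ := exists_primes_sup_primeFactors_pow_sub_one_gt hc
      (fun p hp => hst p hp a ha2 haK) (max B K) M
    refine ⟨S, ⟨fun p hp => ⟨(hS p hp).1, ?_⟩, hsum⟩, ?_, fun p hp => ?_⟩
    · exact (le_max_right B K).trans_lt (hS p hp).2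
    · refine (injOn_sup_primeFactors_pow_sub_one ha2).mono fun p hp => ?_
      exact ⟨(hS p hp).1, (haK.trans (le_max_right B K)).trans_lt (hS p hp).2⟩
    · exact (le_max_left B K).trans_lt (hS p hp).2)
  exact ⟨P, fun a ha => (hgood a ha).1,
    fun a ha a' ha' p hp p' hp' hne heq => hne (hinj ⟨ha, hp⟩ ⟨ha', hp'⟩ heq),
    fun a ha => (hgood a ha).2⟩

theorem stmt_18 (K : ℕ) (hK : 2 ≤ K)
    (stewart : ∃ c : ℝ, 0 < c ∧ ∀ p : ℕ, p.Prime → ∀ a : ℕ, 2 ≤ a → a ≤ K →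
      c * p * Real.log p ≤ (((a ^ p - 1).primeFactors.sup id : ℕ) : ℝ))
    (M : ℝ) :
    ∃ P : ℕ → Finset ℕ,
      (∀ a ∈ Finset.Icc 2 K, ∀ p ∈ P a,
        p.Prime ∧ K < (a ^ p - 1).primeFactors.sup id) ∧
      (∀ a ∈ Finset.Icc 2 K, ∀ a' ∈ Finset.Icc 2 K, ∀ p ∈ P a, ∀ p' ∈ P a',
        (a, p) ≠ (a', p') →
          (a ^ p - 1).primeFactors.sup id ≠ (a' ^ p' - 1).primeFactors.sup id) ∧
      (∀ a ∈ Finset.Icc 2 K, M ≤ ∑ p ∈ P a, (1 : ℝ) / p) :=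
  stmt_18_general K stewart M
end
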